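/- Let S be a semigroup and ω a weight on S with 1/ω ∈ c₀(S). Then 1_{t⁻¹s}/ω ∈ c₀(S) and 1_{st⁻¹}/ω ∈ c₀(S) for all s, t ∈ S, and hence ℓ¹(S,ω) is a dual Banach algebra with predual c₀(S). -/

import Mathlib

open Set Filter

/-- A function on `S` "vanishes at infinity" (belongs to `c₀(S)`). -/
def IsC0 {S : Type*} (g : S → ℝ) : Prop := ∀ ε > 0, {x | ε ≤ |g x|}.Finite

/-- A weight on a semigroup: positive and submultiplicative. -/
def IsWeight {S : Type*} [Mul S] (ω : S → ℝ) : Prop :=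
  (∀ s, 0 < ω s) ∧ ∀ s t, ω (s * t) ≤ ω s * ω t

/-- Membership in `ℓ¹(S, ω)`. -/
def MemL1 {S : Type*} (ω f : S → ℝ) : Prop := Summable fun s => |f s| * ω s

/-- Membership in `c₀(S, ω) = {φ ∈ ℓ∞(S,ω) : φ/ω ∈ c₀(S)}`. -/
def IsC0w {S : Type*} (ω φ : S → ℝ) : Prop := IsC0 fun s => φ s / ω s

/-- The left module action `φ · f` of `f ∈ ℓ¹(S,ω)` on `φ ∈ ℓ∞(S,ω)`,
determined by `⟨φ·f, g⟩ = ⟨φ, f*g⟩`; pointwise `(φ·f)(r) = ∑_u f(u) φ(u r)`. -/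
noncomputable def act {S : Type*} [Mul S] (f φ : S → ℝ) : S → ℝ :=
  fun r => ∑' u, f u * φ (u * r)

/-- The right module action `f · φ`, determined by `⟨f·φ, g⟩ = ⟨φ, g*f⟩`;
pointwise `(f·φ)(r) = ∑_u f(u) φ(r u)`. -/
noncomputable def actR {S : Type*} [Mul S] (f φ : S → ℝ) : S → ℝ :=
  fun r => ∑' u, f u * φ (r * u)

/-- A semigroup is weakly cancellative if `s⁻¹F` and `Fs⁻¹` are finite
for every `s` and every finite `F`. -/
def WeaklyCancellative (S : Type*) [Mul S] : Prop :=
  ∀ (s : S) (F : Finset S), {t | s * t ∈ F}.Finite ∧ {t | t * s ∈ F}.Finite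

/-!
Write `‖f‖ = ∑ |f u| ω u`. Because `φ / ω ∈ c₀(S)`, for every `ε > 0` there is `C` with
`|φ| ≤ ε ω + C`, and because `1 / ω` is bounded, `1 ≤ K ω`. Submultiplicativity then gives
`|φ (u r)| ≤ ω u (ε ω r + C K)`, hence `|(φ · f)(r)| / ω r ≤ ε ‖f‖ + C K ‖f‖ / ω r`, where the last
term tends to `0` since `1 / ω ∈ c₀(S)`. The same works for `r u` in place of `u r`. The indicator
statements are the pointwise bound `1_F / ω ≤ 1 / ω`.
-/

open scoped Topology

section C0

variable {S : Type*}

theorem isC0_iff_tendsto {g : S → ℝ} : IsC0 g ↔ Tendsto g cofinite (𝓝 0) := by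
  simp only [IsC0, Metric.tendsto_nhds, Real.dist_eq, sub_zero, eventually_cofinite, not_lt]

theorem IsC0.mono {g h : S → ℝ} (hg : IsC0 g) (hle : ∀ x, |h x| ≤ |g x|) : IsC0 h :=
  fun ε hε => (hg ε hε).subset fun x (hx : ε ≤ |h x|) => hx.trans (hle x)

theorem IsC0.exists_abs_le {g : S → ℝ} (hg : IsC0 g) : ∃ K, ∀ x, |g x| ≤ K := by
  obtain ⟨K, hK⟩ := (isC0_iff_tendsto.1 hg).abs.bddAbove_range_of_cofinite
  exact ⟨K, fun x => hK ⟨x, rfl⟩⟩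

theorem IsC0w.exists_abs_le_mul_add {ω φ : S → ℝ} (hω : ∀ x, 0 < ω x) (hφ : IsC0w ω φ)
    {ε : ℝ} (hε : 0 < ε) : ∃ C, 0 ≤ C ∧ ∀ x, |φ x| ≤ ε * ω x + C := by
  have hψ : ∀ᶠ x in cofinite, |φ x / ω x| < ε :=
    eventually_cofinite.2 (by simpa only [not_lt] using hφ ε hε)
  have small : ∀ᶠ x in cofinite, |φ x| - ε * ω x ≤ 0 := by
    filter_upwards [hψ] with x hx
    rw [abs_div, abs_of_pos (hω x), div_lt_iff₀ (hω x)] at hx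
    linarith
  obtain ⟨C, hC⟩ := (isBoundedUnder_of_eventually_le small).bddAbove_range_of_cofinite
  refine ⟨max C 0, le_max_right _ _, fun x => ?_⟩
  linarith [hC ⟨x, rfl⟩, le_max_left C 0]

theorem tendsto_zero_of_abs_le_add {α : Type*} {l : Filter α} {G h : α → ℝ}
    (hh : Tendsto h l (𝓝 0)) (hG : ∀ ε > 0, ∃ C, ∀ x, |G x| ≤ ε + C * |h x|) :
    Tendsto G l (𝓝 0) := by
  refine Metric.tendsto_nhds.2 fun η hη => ?_
  obtain ⟨C, hC⟩ := hG (η / 2) (half_pos hη)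
  have hCh : Tendsto (fun x => C * |h x|) l (𝓝 0) := by
    simpa using (hh.abs.const_mul C)
  filter_upwards [hCh.eventually (gt_mem_nhds (half_pos hη))] with x hx
  rw [Real.dist_eq, sub_zero]
  linarith [hC x]

end C0

section Weighted

variable {S : Type*} {ω : S → ℝ}

theorem isC0_indicator_div (hω : ∀ s, 0 < ω s) (h : IsC0 fun s => 1 / ω s) (A : Set S) :
    IsC0 fun r => A.indicator (1 : S → ℝ) r / ω r := by
  refine h.mono fun r => ?_
  have hr := hω r
  rw [abs_div, abs_div, abs_of_pos hr, abs_one]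
  gcongr
  rw [abs_le]
  constructor <;> by_cases hrA : r ∈ A <;> simp [hrA]

theorem isC0w_tsum_mul_comp (hω : ∀ s, 0 < ω s) (h : IsC0 fun s => 1 / ω s)
    {m : S → S → S} (hm : ∀ u r, ω (m u r) ≤ ω u * ω r) {φ f : S → ℝ} (hφ : IsC0w ω φ)
    (hf : MemL1 ω f) : IsC0w ω fun r => ∑' u, f u * φ (m u r) := by
  obtain ⟨K, hK⟩ := h.exists_abs_le
  have one_le : ∀ s, 1 ≤ K * ω s := fun s => by
    have := hK s
    rwa [abs_of_pos (one_div_pos.2 (hω s)), div_le_iff₀ (hω s)] at this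
  set L := ∑' u, |f u| * ω u
  have hL : 0 ≤ L := tsum_nonneg fun u => mul_nonneg (abs_nonneg _) (hω u).le
  refine isC0_iff_tendsto.2 (tendsto_zero_of_abs_le_add (isC0_iff_tendsto.1 h) fun ε hε => ?_)
  obtain ⟨C, hC0, hC⟩ := hφ.exists_abs_le_mul_add hω (div_pos hε (by linarith : 0 < L + 1))
  refine ⟨L * (C * K), fun r => ?_⟩
  set ε' := ε / (L + 1)
  have pointwise : ∀ u, ‖f u * φ (m u r)‖ ≤ |f u| * ω u * (ε' * ω r + C * K) := fun u => by
    have hφu : |φ (m u r)| ≤ ω u * (ε' * ω r + C * K) := calc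
      |φ (m u r)| ≤ ε' * ω (m u r) + C := hC _
      _ ≤ ε' * (ω u * ω r) + C * (K * ω u) := by
        gcongr
        · exact hm u r
        · exact le_mul_of_one_le_right hC0 (one_le u)
      _ = ω u * (ε' * ω r + C * K) := by ring
    rw [Real.norm_eq_abs, abs_mul, mul_assoc]
    exact mul_le_mul_of_nonneg_left hφu (abs_nonneg _)
  have hsum := tsum_of_norm_bounded (hf.hasSum.mul_right _) pointwise
  rw [Real.norm_eq_abs] at hsum
  have hr := hω r
  have hLε : L * ε' ≤ ε := by
    rw [mul_div_assoc', div_le_iff₀ (by linarith)]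
    nlinarith
  rw [abs_div, abs_of_pos hr, abs_div, abs_one, abs_of_pos hr, div_le_iff₀ hr]
  calc |∑' u, f u * φ (m u r)| ≤ L * (ε' * ω r + C * K) := hsum
    _ = L * ε' * ω r + L * (C * K) * (1 / ω r) * ω r := by field_simp
    _ ≤ ε * ω r + L * (C * K) * (1 / ω r) * ω r := by gcongr
    _ = (ε + L * (C * K) * (1 / ω r)) * ω r := by ring

end Weighted

/-- If `1/ω ∈ c₀(S)` then `1_{t⁻¹s}/ω, 1_{st⁻¹}/ω ∈ c₀(S)` for all `s,t`, and hence
`ℓ¹(S,ω)` is a dual Banach algebra with predual `c₀(S)`. -/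
theorem dual_of_inv_weight_c0 {S : Type*} [Semigroup S] {ω : S → ℝ} (hω : IsWeight ω)
    (h : IsC0 fun s => 1 / ω s) :
    (∀ s t : S,
        (IsC0 fun r => Set.indicator {r | t * r = s} (1 : S → ℝ) r / ω r) ∧
        (IsC0 fun r => Set.indicator {r | r * t = s} (1 : S → ℝ) r / ω r)) ∧
      (∀ φ : S → ℝ, IsC0w ω φ → ∀ f : S → ℝ, MemL1 ω f →
        IsC0w ω (act f φ) ∧ IsC0w ω (actR f φ)) := by
  obtain ⟨hpos, hsub⟩ := hω
  refine ⟨fun s t => ⟨isC0_indicator_div hpos h _, isC0_indicator_div hpos h _⟩,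
    fun φ hφ f hf => ⟨isC0w_tsum_mul_comp hpos h hsub hφ hf, ?_⟩⟩
  exact isC0w_tsum_mul_comp hpos h (fun u r => (hsub r u).trans_eq (mul_comm _ _)) hφ hf
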